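/- arXiv:1010.1842 — 2 statements merged into one kernel-verified Lean document; each statement's English description precedes it below -/
import Mathlib

section
/- For every integer k ≥ 2, the series Σ_{n=1}^∞ (−1)^{n−1}·(log k − (H_{kn} − H_n)) converges and its sum equals ∫₀¹ (Q_k′(t)/Q_k(t)) · t^k/(1+t^k) dt, where Q_k(t) = 1 + t + ⋯ + t^{k−1}. -/
open Filter Topology intervalIntegral

/-- The `n`-th harmonic number `Hₙ = Σ_{j=1}^n 1/j`. -/
noncomputable def H (n : ℕ) : ℝ := ∑ j ∈ Finset.range n, 1 / ((j : ℝ) + 1)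

/-- The polynomial `Q_k(t) = 1 + t + ⋯ + t^{k−1}`. -/
noncomputable def Q (k : ℕ) : ℝ → ℝ := fun t => ∑ i ∈ Finset.range k, t ^ i

/-!
Put `g = Q_k'/Q_k`, continuous on `[0,1]` because `Q_k ≥ 1` there. From `(1 - t) Q_k(t) = 1 - t^k`
and `Q_k(t) Q_n(t^k) = Q_{kn}(t)` one gets `g(t) (1 - t^{kn}) = Q_{kn}(t) - k t^{k-1} Q_n(t^k)`;
since `∫₀¹ Q_m = H_m`, integrating gives `∫₀¹ g(t) t^{kn} dt = log k - (H_{kn} - H_n)`.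
The partial sums of the series are therefore integrals of `g` against partial sums of the
geometric series in `-t^k`, which differ from `∫₀¹ g(t) t^k/(1+t^k) dt` by
`± ∫₀¹ g(t) t^{k(m+1)}/(1+t^k) dt = O(1/m)`.
-/

open Set

lemma contDiff_Q (k : ℕ) : ContDiff ℝ 1 (Q k) := by
  unfold Q; fun_prop

@[fun_prop]
lemma continuous_Q (k : ℕ) : Continuous (Q k) := (contDiff_Q k).continuous

lemma continuous_deriv_Q (k : ℕ) : Continuous (deriv (Q k)) :=
  (contDiff_Q k).continuous_deriv le_rfl

lemma Q_zero {k : ℕ} (hk : 1 ≤ k) : Q k 0 = 1 := by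
  obtain ⟨m, rfl⟩ := Nat.exists_eq_add_of_le' hk
  simp [Q, Finset.sum_range_succ']

lemma Q_one (k : ℕ) : Q k 1 = k := by simp [Q]

lemma one_le_Q {k : ℕ} (hk : 1 ≤ k) {t : ℝ} (ht : 0 ≤ t) : 1 ≤ Q k t := by
  simpa [Q] using Finset.single_le_sum (f := fun i => t ^ i) (fun i _ => pow_nonneg ht i)
    (Finset.mem_range.mpr hk)

lemma Q_pos {k : ℕ} (hk : 1 ≤ k) {t : ℝ} (ht : 0 ≤ t) : 0 < Q k t :=
  one_pos.trans_le (one_le_Q hk ht)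

lemma one_sub_mul_Q (k : ℕ) (t : ℝ) : (1 - t) * Q k t = 1 - t ^ k := by
  have := geom_sum_mul t k
  rw [Q]; linarith

lemma Q_mul_Q_pow (k n : ℕ) (t : ℝ) : Q k t * Q n (t ^ k) = Q (k * n) t := by
  induction n with
  | zero => simp [Q]
  | succ n ih =>
    have hsucc : Q (n + 1) (t ^ k) = Q n (t ^ k) + t ^ (k * n) := by
      simp only [Q, Finset.sum_range_succ, pow_mul]
    have hadd : Q (k * n + k) t = Q (k * n) t + t ^ (k * n) * Q k t := by
      simp only [Q, Finset.sum_range_add, Finset.mul_sum, pow_add]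
    rw [hsucc, mul_add, ih, Nat.mul_succ, hadd, mul_comm (Q k t)]

lemma one_sub_mul_deriv_Q (k : ℕ) (t : ℝ) :
    (1 - t) * deriv (Q k) t = Q k t - k * t ^ (k - 1) := by
  have hQ : HasDerivAt (Q k) (deriv (Q k) t) t :=
    ((contDiff_Q k).differentiable one_ne_zero t).hasDerivAt
  have h₁ : HasDerivAt (fun x => (1 - x) * Q k x) (-Q k t + (1 - t) * deriv (Q k) t) t := by
    simpa using ((hasDerivAt_id t).const_sub 1).fun_mul hQ
  rw [funext (one_sub_mul_Q k)] at h₁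
  linarith [h₁.unique ((hasDerivAt_pow k t).const_sub 1)]

lemma integral_Q (n : ℕ) : ∫ t in (0 : ℝ)..1, Q n t = H n := by
  simp only [Q, H]
  rw [intervalIntegral.integral_finsetSum fun i _ => intervalIntegrable_pow i]
  simp [integral_pow]

section LogDeriv

variable {k : ℕ}

lemma continuousOn_logDeriv_Q (hk : 1 ≤ k) :
    ContinuousOn (fun t => deriv (Q k) t / Q k t) (Icc 0 1) :=
  (continuous_deriv_Q k).continuousOn.div (continuous_Q k).continuousOn
    fun _ ht => (Q_pos hk ht.1).ne'

lemma integral_logDeriv_Q (hk : 1 ≤ k) :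
    ∫ t in (0 : ℝ)..1, deriv (Q k) t / Q k t = Real.log k := by
  rw [integral_eq_sub_of_hasDerivAt (f := fun t => Real.log (Q k t))
    (fun t ht => (((contDiff_Q k).differentiable one_ne_zero t).hasDerivAt).log
      (Q_pos hk (by rw [uIcc_of_le zero_le_one] at ht; exact ht.1)).ne')
    ((continuousOn_logDeriv_Q hk).intervalIntegrable_of_Icc zero_le_one)]
  simp [Q_one, Q_zero hk]

lemma integral_Q_pow_mul (hk : 1 ≤ k) (n : ℕ) :
    ∫ t in (0 : ℝ)..1, Q n (t ^ k) * (k * t ^ (k - 1)) = H n := by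
  have h := integral_comp_mul_deriv (a := 0) (b := 1) (g := Q n)
    (fun t _ => hasDerivAt_pow k t) (by fun_prop) (continuous_Q n)
  simp only [Function.comp_def, one_pow, zero_pow (by omega : k ≠ 0)] at h
  rw [h, integral_Q]

lemma integral_logDeriv_Q_mul_pow (hk : 1 ≤ k) (n : ℕ) :
    ∫ t in (0 : ℝ)..1, deriv (Q k) t / Q k t * t ^ (k * n)
      = Real.log k - (H (k * n) - H n) := by
  have hpt : EqOn (fun t => deriv (Q k) t / Q k t * t ^ (k * n))
      (fun t => deriv (Q k) t / Q k t - (Q (k * n) t - Q n (t ^ k) * (k * t ^ (k - 1))))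
      (uIcc 0 1) := by
    intro t ht
    rw [uIcc_of_le zero_le_one] at ht
    have hQ := (Q_pos hk ht.1).ne'
    have h : t ^ (k * n) = 1 - (1 - t) * Q k t * Q n (t ^ k) := by
      rw [mul_assoc, Q_mul_Q_pow, one_sub_mul_Q, sub_sub_cancel]
    dsimp only
    rw [h, ← Q_mul_Q_pow]
    field_simp
    linear_combination (-Q n (t ^ k) * Q k t) * one_sub_mul_deriv_Q k t
  have hQkn : Continuous (Q (k * n)) := continuous_Q _
  have hQn : Continuous fun t => Q n (t ^ k) * (k * t ^ (k - 1)) := by fun_prop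
  rw [integral_congr hpt,
    integral_sub ((continuousOn_logDeriv_Q hk).intervalIntegrable_of_Icc zero_le_one)
      ((hQkn.fun_sub hQn).intervalIntegrable 0 1),
    integral_sub (hQkn.intervalIntegrable 0 1) (hQn.intervalIntegrable 0 1),
    integral_logDeriv_Q hk, integral_Q, integral_Q_pow_mul hk]

end LogDeriv

lemma tendsto_integral_mul_pow_atTop {f : ℝ → ℝ} (hf : ContinuousOn f (Icc 0 1)) :
    Tendsto (fun n : ℕ => ∫ t in (0 : ℝ)..1, f t * t ^ n) atTop (𝓝 0) := by
  obtain ⟨C, hC⟩ := isCompact_Icc.exists_bound_of_continuousOn hf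
  refine squeeze_zero_norm (a := fun n : ℕ => C * (1 / ((n : ℝ) + 1))) (fun n => ?_)
    (by simpa using tendsto_one_div_add_atTop_nhds_zero_nat.const_mul C)
  calc ‖∫ t in (0 : ℝ)..1, f t * t ^ n‖ ≤ ∫ t in (0 : ℝ)..1, C * t ^ n :=
        norm_integral_le_of_norm_le zero_le_one (.of_forall fun t ht => by
          rw [norm_mul, norm_pow, Real.norm_of_nonneg ht.1.le]
          exact mul_le_mul_of_nonneg_right (hC t (Ioc_subset_Icc_self ht))
            (pow_nonneg ht.1.le n))
          (by apply Continuous.intervalIntegrable; fun_prop)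
    _ = C * (1 / ((n : ℝ) + 1)) := by simp [integral_pow]

lemma sum_range_neg_one_pow_mul_pow_succ {u : ℝ} (hu : 1 + u ≠ 0) (m : ℕ) :
    ∑ n ∈ Finset.range m, (-1) ^ n * u ^ (n + 1)
      = u / (1 + u) - (-1) ^ m * u ^ (m + 1) / (1 + u) := by
  induction m with
  | zero => simp
  | succ m ih =>
    rw [Finset.sum_range_succ, ih]
    field_simp
    ring

lemma tendsto_sum_neg_one_pow_mul_integral_mul_pow {f : ℝ → ℝ} (hf : ContinuousOn f (Icc 0 1))
    {p : ℕ} (hp : 0 < p) :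
    Tendsto (fun m => ∑ n ∈ Finset.range m,
        (-1) ^ n * ∫ t in (0 : ℝ)..1, f t * t ^ (p * (n + 1)))
      atTop (𝓝 (∫ t in (0 : ℝ)..1, f t * (t ^ p / (1 + t ^ p)))) := by
  have hden : ∀ t ∈ Icc (0 : ℝ) 1, 1 + t ^ p ≠ 0 := fun t ht => by
    have := pow_nonneg ht.1 p; positivity
  have hfrac : ContinuousOn (fun t => f t / (1 + t ^ p)) (Icc 0 1) :=
    hf.div (by fun_prop) hden
  have hsum (m : ℕ) :
      ∑ n ∈ Finset.range m, (-1) ^ n * ∫ t in (0 : ℝ)..1, f t * t ^ (p * (n + 1))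
      = (∫ t in (0 : ℝ)..1, f t * (t ^ p / (1 + t ^ p)))
        - (-1) ^ m * ∫ t in (0 : ℝ)..1, f t / (1 + t ^ p) * t ^ (p * (m + 1)) := by
    have hint (q : ℕ) : IntervalIntegrable (fun t => f t * t ^ q) MeasureTheory.volume 0 1 :=
      (hf.mul (continuous_pow q).continuousOn).intervalIntegrable_of_Icc zero_le_one
    simp_rw [← integral_const_mul]
    rw [← integral_finsetSum fun n _ => (hint _).const_mul _, ← integral_sub
      ((hf.fun_mul (ContinuousOn.div₀ (by fun_prop) (by fun_prop) hden)).intervalIntegrable_of_Icc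
        zero_le_one)
      (((hfrac.fun_mul (continuous_pow _).continuousOn).intervalIntegrable_of_Icc
        zero_le_one).const_mul _)]
    refine integral_congr fun t ht => ?_
    rw [uIcc_of_le zero_le_one] at ht
    simp only [pow_mul, mul_left_comm _ (f t), ← Finset.mul_sum,
      sum_range_neg_one_pow_mul_pow_succ (hden t ht)]
    ring
  have hexp : Tendsto (fun m : ℕ => p * (m + 1)) atTop atTop :=
    tendsto_atTop_mono (fun m => Nat.le_mul_of_pos_left _ hp) (tendsto_add_atTop_nat 1)
  have hrem : Tendsto (fun m : ℕ => (-1 : ℝ) ^ m *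
      ∫ t in (0 : ℝ)..1, f t / (1 + t ^ p) * t ^ (p * (m + 1))) atTop (𝓝 0) := by
    rw [tendsto_zero_iff_norm_tendsto_zero]
    simpa using ((tendsto_integral_mul_pow_atTop hfrac).comp hexp).norm
  simpa [hsum] using tendsto_const_nhds.sub hrem

/-- For `k ≥ 2`, the series `Σ_{n=1}^∞ (−1)^{n−1}(log k − (H_{kn} − H_n))` converges,
with sum `∫₀¹ (Q_k′(t)/Q_k(t)) · t^k/(1+t^k) dt`. -/
theorem stmt_9 (k : ℕ) (hk : 2 ≤ k) :
    Tendsto (fun m => ∑ n ∈ Finset.range m,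
        (-1 : ℝ) ^ n * (Real.log k - (H (k * (n + 1)) - H (n + 1))))
      atTop
      (𝓝 (∫ t in (0:ℝ)..1, (deriv (Q k) t / Q k t) * (t ^ k / (1 + t ^ k)))) := by
  have hk₁ : 1 ≤ k := by omega
  simpa only [integral_logDeriv_Q_mul_pow hk₁] using
    tendsto_sum_neg_one_pow_mul_integral_mul_pow (continuousOn_logDeriv_Q hk₁) hk₁
end

section
/- The series Σ_{n=1}^∞ (−1)^{n−1}·(log 2 − H_{2n} + H_n) converges and its sum equals (3/4)·log 2 − π/8. -/
/-!
Write `D m = H (2m) - H m`, so that the `n`-th term is `(-1)ⁿ (log 2 - D (n+1))`. Summation by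
parts rewrites twice the `m`-th partial sum as `log 2 - Σ_{t<m} (-1)ᵗ (D (t+1) - D t)` plus the
boundary term `(-1)ᵐ (D m - log 2)`, which vanishes because `D m → log 2`. The increments are
`D (t+1) - D t = 1/(2t+1) - 1/(2t+2)`, so the remaining series is Leibniz's series for `π/4` minus
half the alternating harmonic series, whose sum `log 2` is read off from its even partial sums
`D m`.
-/

open Filter Topology

open Finset Real

theorem two_mul_sum_neg_one_pow_mul_sub {R : Type*} [CommRing R] (D : ℕ → R) (h0 : D 0 = 0)
    (L : R) (m : ℕ) :
    2 * ∑ n ∈ range m, (-1) ^ n * (L - D (n + 1)) =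
      L - ∑ n ∈ range m, (-1) ^ n * (D (n + 1) - D n) + (-1) ^ m * (D m - L) := by
  induction m with
  | zero => simp [h0]
  | succ m ih => rw [sum_range_succ, sum_range_succ, mul_add, ih, pow_succ]; ring

theorem tendsto_sum_neg_one_pow_mul_sub {𝕜 : Type*} [NormedField 𝕜] [CharZero 𝕜]
    {D : ℕ → 𝕜} {L M : 𝕜} (h0 : D 0 = 0) (hD : Tendsto D atTop (𝓝 L))
    (hM : Tendsto (fun m ↦ ∑ n ∈ range m, (-1) ^ n * (D (n + 1) - D n)) atTop (𝓝 M)) :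
    Tendsto (fun m ↦ ∑ n ∈ range m, (-1) ^ n * (L - D (n + 1))) atTop (𝓝 ((L - M) / 2)) := by
  have hrem : Tendsto (fun m : ℕ ↦ (-1 : 𝕜) ^ m * (D m - L)) atTop (𝓝 0) := by
    rw [tendsto_zero_iff_norm_tendsto_zero]
    simpa [norm_mul, norm_pow] using (tendsto_sub_nhds_zero_iff.2 hD).norm
  have h2 := ((tendsto_const_nhds (x := L)).sub hM |>.add hrem).const_mul (2⁻¹ : 𝕜)
  rw [add_zero, ← div_eq_inv_mul] at h2
  refine h2.congr fun m ↦ ?_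
  rw [← two_mul_sum_neg_one_pow_mul_sub D h0 L m, inv_mul_cancel_left₀ two_ne_zero]

lemma H_eq_harmonic (n : ℕ) : H n = harmonic n := by simp [H, harmonic, one_div]

lemma H_succ (n : ℕ) : H (n + 1) = H n + 1 / (n + 1) := by simp [H, sum_range_succ]

lemma H_two_mul_succ_sub (m : ℕ) :
    H (2 * (m + 1)) - H (m + 1) = H (2 * m) - H m + (1 / (2 * m + 1) - 1 / (2 * m + 2)) := by
  rw [show 2 * (m + 1) = 2 * m + 1 + 1 by ring, H_succ, H_succ, H_succ]
  push_cast
  field_simp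
  ring

lemma tendsto_H_two_mul_sub_H : Tendsto (fun m ↦ H (2 * m) - H m) atTop (𝓝 (log 2)) := by
  have h2 : Tendsto (fun m : ℕ ↦ 2 * m) atTop atTop := tendsto_id.const_mul_atTop' two_pos
  have h := (tendsto_harmonic_sub_log.comp h2).sub tendsto_harmonic_sub_log |>.add_const (log 2)
  rw [sub_self, zero_add] at h
  refine h.congr' ?_
  filter_upwards [eventually_ne_atTop 0] with m hm
  rw [Function.comp_apply, H_eq_harmonic, H_eq_harmonic, Nat.cast_mul, Nat.cast_ofNat,
    log_mul two_ne_zero (Nat.cast_ne_zero.2 hm)]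
  ring

lemma sum_range_two_mul_neg_one_pow_div_succ (m : ℕ) :
    ∑ j ∈ range (2 * m), (-1 : ℝ) ^ j / (j + 1) = H (2 * m) - H m := by
  induction m with
  | zero => simp [H]
  | succ m ih =>
    rw [H_two_mul_succ_sub, ← ih, show 2 * (m + 1) = 2 * m + 1 + 1 by ring, sum_range_succ,
      sum_range_succ]
    simp only [pow_succ, pow_mul]
    push_cast
    ring

theorem tendsto_sum_neg_one_pow_div_succ :
    Tendsto (fun k ↦ ∑ j ∈ range k, (-1 : ℝ) ^ j / (j + 1)) atTop (𝓝 (log 2)) := by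
  have hanti : Antitone fun j : ℕ ↦ 1 / ((j : ℝ) + 1) := fun _ _ hab ↦ Nat.one_div_le_one_div hab
  obtain ⟨l, hl⟩ :=
    hanti.tendsto_alternating_series_of_tendsto_zero tendsto_one_div_add_atTop_nhds_zero_nat
  simp_rw [mul_one_div] at hl
  have heven := hl.comp (tendsto_id.const_mul_atTop' two_pos)
  have hl2 : l = log 2 := tendsto_nhds_unique heven <|
    tendsto_H_two_mul_sub_H.congr fun m ↦ (sum_range_two_mul_neg_one_pow_div_succ m).symm
  rwa [hl2] at hl

lemma tendsto_sum_neg_one_pow_mul_odd_sub_even :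
    Tendsto (fun m ↦ ∑ t ∈ range m, (-1 : ℝ) ^ t * (1 / (2 * t + 1) - 1 / (2 * t + 2))) atTop
      (𝓝 (π / 4 - log 2 / 2)) := by
  refine (tendsto_sum_pi_div_four.sub (tendsto_sum_neg_one_pow_div_succ.div_const 2)).congr
    fun m ↦ ?_
  rw [sum_div, ← sum_sub_distrib]
  refine sum_congr rfl fun t _ ↦ ?_
  field_simp

/-- The series `Σ_{n=1}^∞ (−1)^{n−1}(log 2 − H_{2n} + H_n)` converges,
with sum `(3/4)·log 2 − π/8`. -/
theorem stmt_17 :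
    Tendsto (fun m => ∑ n ∈ Finset.range m,
        (-1 : ℝ) ^ n * (Real.log 2 - H (2 * (n + 1)) + H (n + 1)))
      atTop
      (𝓝 ((3 / 4) * Real.log 2 - Real.pi / 8)) := by
  have h := tendsto_sum_neg_one_pow_mul_sub (D := fun m ↦ H (2 * m) - H m) (by simp [H])
    tendsto_H_two_mul_sub_H <| tendsto_sum_neg_one_pow_mul_odd_sub_even.congr fun m ↦ by
      simp_rw [H_two_mul_succ_sub, add_sub_cancel_left]
  convert h using 2 with m
  · simp_rw [sub_add]
  · ring
end
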